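/- Average conditional min-entropy decreases by at most t bits when conditioning on an additional variable taking at most 2^t values: for finite random variables X, Z, V with V taking values in a set of size at most 2^t, H̃_∞(X | Z, V) ≥ H̃_∞(X | Z) − t. -/
import Mathlib


open scoped Classical

/-- The average guessing probability `E_{z}[max_x Pr[X = x, Z = z]]
  = ∑_z max_x Pr[X = x ∧ Z = z]`, whose negative log is the average
  conditional min-entropy `H̃_∞(X|Z)`. -/
noncomputable def avgGuess {Ω 𝒳 𝒵 : Type*} [Fintype Ω] [Fintype 𝒳] [Fintype 𝒵]
    (p : Ω → ℝ) (X : Ω → 𝒳) (Z : Ω → 𝒵) : ℝ :=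
  ∑ z : 𝒵, ⨆ x : 𝒳, ∑ ω ∈ Finset.univ.filter (fun ω => X ω = x ∧ Z ω = z), p ω

/-- Average conditional min-entropy `H̃_∞(X|Z)`. -/
noncomputable def avgMinEnt {Ω 𝒳 𝒵 : Type*} [Fintype Ω] [Fintype 𝒳] [Fintype 𝒵]
    (p : Ω → ℝ) (X : Ω → 𝒳) (Z : Ω → 𝒵) : ℝ :=
  - Real.logb 2 (avgGuess p X Z)

/-- conditioning on an additional variable `V` with at most `2^t`
values decreases average conditional min-entropy by at most `t` bits. -/
theorem avgMinEnt_chain_rule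
    {Ω 𝒳 𝒵 𝒱 : Type*} [Fintype Ω] [Fintype 𝒳] [Fintype 𝒵] [Fintype 𝒱]
    (p : Ω → ℝ) (hp0 : ∀ ω, 0 ≤ p ω) (hp1 : ∑ ω, p ω = 1)
    (X : Ω → 𝒳) (Z : Ω → 𝒵) (V : Ω → 𝒱)
    (t : ℕ) (hV : Fintype.card 𝒱 ≤ 2 ^ t) :
    avgMinEnt p X (fun ω => (Z ω, V ω)) ≥ avgMinEnt p X Z - t := by
  classical
  have hΩ : Nonempty Ω := by
    rcases isEmpty_or_nonempty Ω with h | h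
    · simp [Finset.univ_eq_empty] at hp1
    · exact h
  obtain ⟨ω0⟩ := hΩ
  have h𝒳 : Nonempty 𝒳 := ⟨X ω0⟩
  have h𝒱 : Nonempty 𝒱 := ⟨V ω0⟩
  set S : 𝒳 → 𝒵 → ℝ := fun x z => ∑ ω ∈ Finset.univ.filter (fun ω => X ω = x ∧ Z ω = z), p ω with hSdef
  set T : 𝒳 → 𝒵 → 𝒱 → ℝ := fun x z v =>
    ∑ ω ∈ Finset.univ.filter (fun ω => X ω = x ∧ Z ω = z ∧ V ω = v), p ω with hTdef
  have hSnn : ∀ x z, 0 ≤ S x z := fun x z => Finset.sum_nonneg fun ω _ => hp0 ω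
  have hTnn : ∀ x z v, 0 ≤ T x z v := fun x z v => Finset.sum_nonneg fun ω _ => hp0 ω
  have hbddS : ∀ z : 𝒵, BddAbove (Set.range fun x => S x z) :=
    fun z => Set.Finite.bddAbove (Set.finite_range _)
  have hbddT : ∀ (z : 𝒵) (v : 𝒱), BddAbove (Set.range fun x => T x z v) :=
    fun z v => Set.Finite.bddAbove (Set.finite_range _)
  set G : ℝ := avgGuess p X Z with hGdef
  set G' : ℝ := avgGuess p X (fun ω => (Z ω, V ω)) with hG'def
  have hGeq : G = ∑ z, ⨆ x, S x z := rfl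
  have hG'eq : G' = ∑ z, ∑ v, ⨆ x, T x z v := by
    rw [hG'def, avgGuess, Fintype.sum_prod_type]
    simp only [hTdef, Prod.mk.injEq]
  -- sup bounds
  have hsupSnn : ∀ z, 0 ≤ ⨆ x, S x z := fun z =>
    le_ciSup_of_le (hbddS z) (Classical.arbitrary 𝒳) (hSnn _ z)
  have hsupTnn : ∀ z v, 0 ≤ ⨆ x, T x z v := fun z v =>
    le_ciSup_of_le (hbddT z v) (Classical.arbitrary 𝒳) (hTnn _ z v)
  -- T sup ≤ S sup
  have hTS : ∀ z v, (⨆ x, T x z v) ≤ ⨆ x, S x z := by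
    intro z v
    refine ciSup_le fun x => le_ciSup_of_le (hbddS z) x ?_
    refine Finset.sum_le_sum_of_subset_of_nonneg ?_ (fun ω _ _ => hp0 ω)
    intro ω hω
    simp only [Finset.mem_filter, Finset.mem_univ, true_and] at hω ⊢
    exact ⟨hω.1, hω.2.1⟩
  -- total mass
  have hsum1 : ∑ z, ∑ x, S x z = 1 := by
    rw [Finset.sum_comm, ← hp1,
      ← Finset.sum_fiberwise_of_maps_to (g := fun ω => (X ω, Z ω)) (fun ω _ => Finset.mem_univ _) p,
      Fintype.sum_prod_type]
    simp [hSdef, Prod.ext_iff]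
  -- positivity of G
  have hcard𝒳 : (0:ℝ) < Fintype.card 𝒳 := by
    exact_mod_cast Fintype.card_pos
  have hG1 : (1:ℝ) ≤ Fintype.card 𝒳 * G := by
    rw [← hsum1, hGeq, Finset.mul_sum]
    refine Finset.sum_le_sum fun z _ => ?_
    calc ∑ x, S x z ≤ ∑ _x : 𝒳, ⨆ x, S x z :=
          Finset.sum_le_sum fun x _ => le_ciSup (hbddS z) x
      _ = Fintype.card 𝒳 * ⨆ x, S x z := by
          rw [Finset.sum_const, Finset.card_univ, nsmul_eq_mul]
  have hGpos : 0 < G := by nlinarith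
  -- positivity of G'
  have hkey : ∑ x, ∑ z, ∑ v, T x z v = 1 := by
    rw [← hp1,
      ← Finset.sum_fiberwise_of_maps_to (g := fun ω => (X ω, Z ω, V ω)) (fun ω _ => Finset.mem_univ _) p,
      Fintype.sum_prod_type]
    refine Finset.sum_congr rfl fun x _ => ?_
    rw [Fintype.sum_prod_type]
    simp only [hTdef, Prod.mk.injEq]
  have hsum1' : ∑ z, ∑ v, ∑ x, T x z v = 1 := by
    calc ∑ z, ∑ v, ∑ x, T x z v = ∑ z, ∑ x, ∑ v, T x z v :=
          Finset.sum_congr rfl fun z _ => Finset.sum_comm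
      _ = ∑ x, ∑ z, ∑ v, T x z v := Finset.sum_comm
      _ = 1 := hkey
  have hG'1 : (1:ℝ) ≤ Fintype.card 𝒳 * G' := by
    rw [← hsum1', hG'eq, Finset.mul_sum]
    refine Finset.sum_le_sum fun z _ => ?_
    rw [Finset.mul_sum]
    refine Finset.sum_le_sum fun v _ => ?_
    calc ∑ x, T x z v ≤ ∑ _x : 𝒳, ⨆ x, T x z v :=
          Finset.sum_le_sum fun x _ => le_ciSup (hbddT z v) x
      _ = Fintype.card 𝒳 * ⨆ x, T x z v := by
          rw [Finset.sum_const, Finset.card_univ, nsmul_eq_mul]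
  have hG'pos : 0 < G' := by nlinarith
  have hGG' : G' ≤ 2 ^ t * G := by
    calc G' = ∑ z, ∑ v, ⨆ x, T x z v := hG'eq
      _ ≤ ∑ z, ∑ _v : 𝒱, ⨆ x, S x z :=
          Finset.sum_le_sum fun z _ => Finset.sum_le_sum fun v _ => hTS z v
      _ = ∑ z, (Fintype.card 𝒱 : ℝ) * ⨆ x, S x z := by
          simp [Finset.sum_const, Finset.card_univ, nsmul_eq_mul]
      _ ≤ ∑ z, (2 ^ t : ℝ) * ⨆ x, S x z := by
          refine Finset.sum_le_sum fun z _ => ?_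
          refine mul_le_mul_of_nonneg_right ?_ (hsupSnn z)
          exact_mod_cast hV
      _ = 2 ^ t * G := by rw [hGeq, Finset.mul_sum]
  have hlog : Real.logb 2 G' ≤ Real.logb 2 (2 ^ t * G) := by
    exact Real.logb_le_logb_of_le (by norm_num) hG'pos hGG'
  have hlogeq : Real.logb 2 ((2:ℝ) ^ t * G) = t + Real.logb 2 G := by
    rw [Real.logb_mul (by positivity) hGpos.ne', Real.logb_pow]
    simp [Real.logb_self_eq_one]
  rw [avgMinEnt, avgMinEnt, ← hGdef, ← hG'def]
  have : Real.logb 2 G' ≤ t + Real.logb 2 G := hlogeq ▸ hlog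
  linarith
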